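/- arXiv:0906.4321 — 2 statements merged into one kernel-verified Lean document; each statement's English description precedes it below -/
import Mathlib

section
/- (X_i-theory consistency) If Γ is a set of sentences that is maximal AX^{X,A,∀}_e-consistent with respect to L and contains both ¬X_i φ and A_i φ, then Γ/X_i ∪ {¬φ} is AX^{X,A,∀}_e-consistent, where Γ/X_i = {ψ : X_i ψ ∈ Γ}. -/
/-! If `Γ/X_i, ¬φ` were inconsistent, then `⊢ ψ₁ ∧ … ∧ ψₙ ⇒ φ` for some `ψⱼ` with `X_i ψⱼ ∈ Γ`.
Peeling the premises off one at a time, `Gen_X` and `K_X` turn this into `Γ ⊢ X_i φ`; the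
awareness side condition of `Gen_X` is met because `A_i` distributes over implications by AGPP,
`A_i φ ∈ Γ`, and `A0_X` yields `A_i ψⱼ` from `X_i ψⱼ`. This contradicts `¬X_i φ ∈ Γ`. -/

namespace AwarenessPaper

inductive Fm : Type
  | prop : ℕ → Fm
  | var  : ℕ → Fm
  | neg  : Fm → Fm
  | and  : Fm → Fm → Fm
  | k    : ℕ → Fm → Fm
  | a    : ℕ → Fm → Fm
  | x    : ℕ → Fm → Fm
  | all  : ℕ → Fm → Fm

namespace Fm

def props : Fm → Set ℕ
  | .prop p => {p}
  | .var _ => ∅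
  | .neg φ => props φ
  | .and φ ψ => props φ ∪ props ψ
  | .k _ φ => props φ
  | .a _ φ => props φ
  | .x _ φ => props φ
  | .all _ φ => props φ

def free : Fm → Set ℕ
  | .prop _ => ∅
  | .var v => {v}
  | .neg φ => free φ
  | .and φ ψ => free φ ∪ free ψ
  | .k _ φ => free φ
  | .a _ φ => free φ
  | .x _ φ => free φ
  | .all v φ => free φ \ {v}

def qcount : Fm → ℕ
  | .prop _ => 0
  | .var _ => 0
  | .neg φ => qcount φ
  | .and φ ψ => max (qcount φ) (qcount ψ)
  | .k _ φ => qcount φ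
  | .a _ φ => qcount φ
  | .x _ φ => qcount φ
  | .all _ φ => qcount φ + 1

def substV (v : ℕ) (ψ : Fm) : Fm → Fm
  | .prop p => .prop p
  | .var u => if u = v then ψ else .var u
  | .neg φ => .neg (substV v ψ φ)
  | .and φ₁ φ₂ => .and (substV v ψ φ₁) (substV v ψ φ₂)
  | .k i φ => .k i (substV v ψ φ)
  | .a i φ => .a i (substV v ψ φ)
  | .x i φ => .x i (substV v ψ φ)
  | .all u φ => if u = v then .all u φ else .all u (substV v ψ φ)

def substP (q : ℕ) (ψ : Fm) : Fm → Fm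
  | .prop p => if p = q then ψ else .prop p
  | .var u => .var u
  | .neg φ => .neg (substP q ψ φ)
  | .and φ₁ φ₂ => .and (substP q ψ φ₁) (substP q ψ φ₂)
  | .k i φ => .k i (substP q ψ φ)
  | .a i φ => .a i (substP q ψ φ)
  | .x i φ => .x i (substP q ψ φ)
  | .all u φ => .all u (substP q ψ φ)

/-- Primitive propositions of a formula, as a list. -/
def propList : Fm → List ℕ
  | .prop p => [p]
  | .var _ => []
  | .neg φ => propList φ
  | .and φ ψ => propList φ ++ propList ψ
  | .k _ φ => propList φ
  | .a _ φ => propList φ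
  | .x _ φ => propList φ
  | .all _ φ => propList φ

def or (φ ψ : Fm) : Fm := .neg (.and (.neg φ) (.neg ψ))
def imp (φ ψ : Fm) : Fm := Fm.or (.neg φ) ψ
def iff (φ ψ : Fm) : Fm := .and (imp φ ψ) (imp ψ φ)
def top : Fm := Fm.or (.prop 0) (.neg (.prop 0))
def bot : Fm := .neg top

/-- Boolean evaluation of the propositional skeleton of a formula, treating
everything other than `¬` and `∧` as an atom.  `∀ v, beval v φ = true` says
exactly that `φ` is a substitution instance of a propositional tautology. -/
def beval (v : Fm → Bool) : Fm → Bool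
  | .neg φ => ! beval v φ
  | .and φ ψ => beval v φ && beval v ψ
  | φ => v φ

end Fm

/-- Conjunction of a list of formulas (the empty conjunction is `⊤`). -/
def conj : List Fm → Fm
  | [] => Fm.top
  | φ :: l => Fm.and φ (conj l)

/-- The theorems of the axiom system `AX^{X,A,∀}_e`:
Prop, AGPP, XA, FA*_X, K_X, A0_X, 1_∀, K_∀, N_∀, Barcan*_X, MP, Gen_X, Gen_∀. -/
inductive Thm : Fm → Prop
  | taut (φ : Fm) (h : ∀ v : Fm → Bool, Fm.beval v φ = true) : Thm φ
  | agppAx (i : ℕ) (φ : Fm) :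
      Thm (Fm.iff (.a i φ) (conj ((Fm.propList φ).map fun p => Fm.a i (.prop p))))
  | xaAx (i : ℕ) (φ : Fm) : Thm (Fm.imp (.a i φ) (.x i (.a i φ)))
  | faAx (i x : ℕ) :
      Thm (Fm.imp (.all x (.neg (.a i (.var x)))) (.x i (.all x (.neg (.a i (.var x))))))
  | kAx (i : ℕ) (φ ψ : Fm) :
      Thm (Fm.imp (.and (.x i φ) (.x i (Fm.imp φ ψ))) (.x i ψ))
  | a0Ax (i : ℕ) (φ : Fm) : Thm (Fm.imp (.x i φ) (.a i φ))
  | oneAll (x : ℕ) (φ ψ : Fm) (h1 : Fm.qcount ψ = 0) (h2 : Fm.free ψ = ∅) :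
      Thm (Fm.imp (.all x φ) (Fm.substV x ψ φ))
  | kAll (x : ℕ) (φ ψ : Fm) :
      Thm (Fm.imp (.all x (Fm.imp φ ψ)) (Fm.imp (.all x φ) (.all x ψ)))
  | nAll (x : ℕ) (φ : Fm) (h : x ∉ Fm.free φ) : Thm (Fm.imp φ (.all x φ))
  | barcanAx (i x : ℕ) (φ : Fm) :
      Thm (Fm.imp (.and (.a i (.all x φ)) (.all x (Fm.imp (.a i (.var x)) (.x i φ))))
                  (.x i (Fm.imp (.all x (.a i (.var x))) (.all x φ))))
  | mp (φ ψ : Fm) : Thm (Fm.imp φ ψ) → Thm φ → Thm ψ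
  | genX (i : ℕ) (φ : Fm) : Thm φ → Thm (Fm.imp (.a i φ) (.x i φ))
  | genAll (x q : ℕ) (φ : Fm) : Thm φ → Thm (.all x (Fm.substP q (.var x) φ))

/-- `Γ ⊢ φ`: derivable from finitely many members of `Γ` and theorems of
`AX^{X,A,∀}_e` by modus ponens. -/
def Derivable (Γ : Set Fm) (φ : Fm) : Prop :=
  ∃ l : List Fm, (∀ ψ ∈ l, ψ ∈ Γ) ∧ Thm (Fm.imp (conj l) φ)

def Consistent (Γ : Set Fm) : Prop := ¬ Derivable Γ Fm.bot

/-- `Γ` is acceptable with respect to `L`: whenever `φ` is a formula over `L`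
with (at most) the free variable `x` and `Γ ⊢ φ[x/q]` for all but finitely many
primitive propositions `q ∈ L`, then `Γ ⊢ ∀x φ`. -/
def Acceptable (Γ : Set Fm) (L : Set ℕ) : Prop :=
  ∀ (x : ℕ) (φ : Fm), Fm.props φ ⊆ L → Fm.free φ ⊆ {x} →
    {q ∈ L | ¬ Derivable Γ (Fm.substV x (.prop q) φ)}.Finite →
    Derivable Γ (.all x φ)

/-- `Γ` is a maximal consistent set of sentences with respect to `L`. -/
def MaxConsistent (Γ : Set Fm) (L : Set ℕ) : Prop :=
  (∀ φ ∈ Γ, Fm.props φ ⊆ L ∧ Fm.free φ = ∅) ∧ Consistent Γ ∧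
    ∀ φ : Fm, Fm.props φ ⊆ L → Fm.free φ = ∅ → Consistent (insert φ Γ) → φ ∈ Γ

namespace Fm

@[simp] lemma beval_neg (v : Fm → Bool) (φ : Fm) : beval v (.neg φ) = !beval v φ := rfl

@[simp] lemma beval_and (v : Fm → Bool) (φ ψ : Fm) :
    beval v (.and φ ψ) = (beval v φ && beval v ψ) := rfl

@[simp] lemma beval_imp (v : Fm → Bool) (φ ψ : Fm) :
    beval v (imp φ ψ) = (!beval v φ || beval v ψ) := by
  simp [imp, or, beval]

@[simp] lemma beval_top (v : Fm → Bool) : beval v top = true := by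
  simp [top, or, beval]

@[simp] lemma beval_bot (v : Fm → Bool) : beval v bot = false := by
  simp [bot]

lemma propList_imp (φ ψ : Fm) : (imp φ ψ).propList = φ.propList ++ ψ.propList := rfl

end Fm

@[simp] lemma beval_conj (v : Fm → Bool) (l : List Fm) :
    Fm.beval v (conj l) = l.all (Fm.beval v) := by
  induction l with
  | nil => simp [conj]
  | cons φ l ih => simp [conj, ih]

namespace Thm

lemma of_taut_imp {φ ψ : Fm} (h : Thm φ)
    (htaut : ∀ v, Fm.beval v φ = true → Fm.beval v ψ = true) : Thm ψ := by
  refine mp _ _ (taut _ fun v => ?_) h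
  cases hv : Fm.beval v φ <;> simp [hv, htaut v]

end Thm

namespace Derivable

variable {Γ : Set Fm} {φ ψ : Fm}

lemma of_thm (h : Thm φ) : Derivable Γ φ :=
  ⟨[], by simp, h.of_taut_imp fun v => by simp_all⟩

lemma of_mem (h : φ ∈ Γ) : Derivable Γ φ :=
  ⟨[φ], by simpa using h, Thm.taut _ fun v => by cases Fm.beval v φ <;> simp [conj]⟩

lemma mp (himp : Derivable Γ (Fm.imp φ ψ)) (hφ : Derivable Γ φ) : Derivable Γ ψ := by
  obtain ⟨l₁, hl₁, ht₁⟩ := himp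
  obtain ⟨l₂, hl₂, ht₂⟩ := hφ
  refine ⟨l₁ ++ l₂, by simpa [or_imp, forall_and] using And.intro hl₁ hl₂, ?_⟩
  have hcombine : Thm (Fm.imp (Fm.imp (conj l₁) (Fm.imp φ ψ))
      (Fm.imp (Fm.imp (conj l₂) φ) (Fm.imp (conj (l₁ ++ l₂)) ψ))) :=
    Thm.taut _ fun v => by
      simp only [Fm.beval_imp, beval_conj, List.all_append]
      cases l₁.all (Fm.beval v) <;> cases l₂.all (Fm.beval v) <;>
        cases Fm.beval v φ <;> cases Fm.beval v ψ <;> rfl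
  exact Thm.mp _ _ (Thm.mp _ _ hcombine ht₁) ht₂

lemma of_taut_imp (hφ : Derivable Γ φ)
    (htaut : ∀ v, Fm.beval v φ = true → Fm.beval v ψ = true) : Derivable Γ ψ :=
  (of_thm (Thm.taut _ fun v => by cases hv : Fm.beval v φ <;> simp [hv, htaut v])).mp hφ

lemma and (hφ : Derivable Γ φ) (hψ : Derivable Γ ψ) : Derivable Γ (.and φ ψ) :=
  (of_thm (Thm.taut (Fm.imp φ (Fm.imp ψ (.and φ ψ))) fun v => by
    cases hφv : Fm.beval v φ <;> simp [hφv])).mp hφ |>.mp hψ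

lemma conj_append {l₁ l₂ : List Fm} (h₁ : Derivable Γ (conj l₁)) (h₂ : Derivable Γ (conj l₂)) :
    Derivable Γ (conj (l₁ ++ l₂)) :=
  (h₁.and h₂).of_taut_imp fun v => by simp

lemma iff_mp (h : Derivable Γ (Fm.iff φ ψ)) (hφ : Derivable Γ φ) : Derivable Γ ψ :=
  (h.and hφ).of_taut_imp fun v => by cases hφv : Fm.beval v φ <;> simp [Fm.iff, hφv]

lemma iff_mpr (h : Derivable Γ (Fm.iff φ ψ)) (hψ : Derivable Γ ψ) : Derivable Γ φ :=
  (h.and hψ).of_taut_imp fun v => by cases hψv : Fm.beval v ψ <;> simp [Fm.iff, hψv]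

lemma imp_of_union_singleton (h : Derivable (Γ ∪ {φ}) ψ) : Derivable Γ (Fm.imp φ ψ) := by
  classical
  obtain ⟨l, hl, ht⟩ := h
  refine ⟨l.filter (· ≠ φ), fun χ hχ => ?_, ht.of_taut_imp fun v hv => ?_⟩
  · obtain ⟨hχl, hχφ⟩ := List.mem_filter.1 hχ
    simpa [of_decide_eq_true hχφ] using hl χ hχl
  · simp only [Fm.beval_imp, beval_conj, Bool.or_eq_true, Bool.not_eq_true', Bool.not_eq_true,
      List.all_eq_false, List.mem_filter, decide_eq_true_eq] at hv ⊢
    rcases hv with ⟨χ, hχ, hχv⟩ | hψ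
    · by_cases hχφ : χ = φ
      · exact .inr (.inl (hχφ ▸ hχv))
      · exact .inl ⟨χ, ⟨hχ, hχφ⟩, hχv⟩
    · exact .inr (.inr hψ)

end Derivable

section Awareness

variable {Γ : Set Fm} {i : ℕ}

lemma derivable_a_of_derivable_x {φ : Fm} (h : Derivable Γ (.x i φ)) : Derivable Γ (.a i φ) :=
  (Derivable.of_thm (Thm.a0Ax i φ)).mp h

lemma derivable_a_imp {φ ψ : Fm} (hφ : Derivable Γ (.a i φ)) (hψ : Derivable Γ (.a i ψ)) :
    Derivable Γ (.a i (Fm.imp φ ψ)) := by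
  refine (Derivable.of_thm (Thm.agppAx i _)).iff_mpr ?_
  rw [Fm.propList_imp, List.map_append]
  exact ((Derivable.of_thm (Thm.agppAx i φ)).iff_mp hφ).conj_append
    ((Derivable.of_thm (Thm.agppAx i ψ)).iff_mp hψ)

lemma derivable_x_of_thm_conj_imp {l : List Fm} {φ : Fm} (hl : ∀ ψ ∈ l, Derivable Γ (.x i ψ))
    (hφ : Derivable Γ (.a i φ)) (hthm : Thm (Fm.imp (conj l) φ)) : Derivable Γ (.x i φ) := by
  induction l generalizing φ with
  | nil =>
    have hφthm : Thm φ := hthm.of_taut_imp fun v hv => by simpa [conj] using hv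
    exact (Derivable.of_thm (Thm.genX i φ hφthm)).mp hφ
  | cons ψ l ih =>
    have hψ : Derivable Γ (.x i ψ) := hl ψ (List.mem_cons_self ..)
    have hcurried : Thm (Fm.imp (conj l) (Fm.imp ψ φ)) := hthm.of_taut_imp fun v hv => by
      cases hψv : Fm.beval v ψ <;> simp_all [conj]
    have hxψφ : Derivable Γ (.x i (Fm.imp ψ φ)) :=
      ih (fun χ hχ => hl χ (List.mem_cons_of_mem ψ hχ))
        (derivable_a_imp (derivable_a_of_derivable_x hψ) hφ) hcurried
    exact (Derivable.of_thm (Thm.kAx i ψ φ)).mp (hψ.and hxψφ)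

end Awareness

/-- `X_i`-theory consistency: if `Γ` is maximal consistent w.r.t. `L` and contains
`¬X_i φ` and `A_i φ`, then `Γ/X_i ∪ {¬φ}` is consistent. -/
theorem stmt18 (Γ : Set Fm) (L : Set ℕ) (i : ℕ) (φ : Fm)
    (hmax : MaxConsistent Γ L) (h1 : Fm.neg (.x i φ) ∈ Γ) (h2 : Fm.a i φ ∈ Γ) :
    Consistent ({ψ : Fm | Fm.x i ψ ∈ Γ} ∪ {Fm.neg φ}) := by
  intro hinconsistent
  obtain ⟨l, hl, hthm⟩ := Derivable.imp_of_union_singleton hinconsistent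
  have hφ : Thm (Fm.imp (conj l) φ) := hthm.of_taut_imp fun v hv => by
    cases hφv : Fm.beval v φ <;> simp_all
  have hxφ : Derivable Γ (.x i φ) :=
    derivable_x_of_thm_conj_imp (fun ψ hψ => .of_mem (hl ψ hψ)) (.of_mem h2) hφ
  exact hmax.2.1 (((Derivable.of_mem h1).and hxφ).of_taut_imp fun v => by simp)

end AwarenessPaper
end

section
/- (A_i* validates Gen*) In any extended awareness structure, if φ is a formula that is true at every world of M at which it is defined (i.e., at which its primitive propositions are in the local language), then A_i*φ ⇒ K_iφ is true at every world at which it is defined, where A_i*φ = K_i(φ ∨ ¬φ). -/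
/-!
`A_i^* φ` holds at `s` exactly when `φ` is defined at `s` and at every `i`-successor of `s`.
At each such successor `φ` is then true by hypothesis, so `K_i φ` holds at `s`.
-/

namespace AwarenessPaper

namespace Fm

/-- All variables occurring in a formula (free or bound). -/
def vars : Fm → Set ℕ
  | .prop _ => ∅
  | .var v => {v}
  | .neg φ => vars φ
  | .and φ ψ => vars φ ∪ vars ψ
  | .k _ φ => vars φ
  | .a _ φ => vars φ
  | .x _ φ => vars φ
  | .all v φ => insert v (vars φ)

/-- Rename primitive propositions along `τ`. -/
def rename (τ : ℕ → ℕ) : Fm → Fm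
  | .prop p => .prop (τ p)
  | .var u => .var u
  | .neg φ => .neg (rename τ φ)
  | .and φ₁ φ₂ => .and (rename τ φ₁) (rename τ φ₂)
  | .k i φ => .k i (rename τ φ)
  | .a i φ => .a i (rename τ φ)
  | .x i φ => .x i (rename τ φ)
  | .all u φ => .all u (rename τ φ)

/-- `A_i^* φ`, an abbreviation for `K_i (φ ∨ ¬φ)`. -/
def astar (i : ℕ) (φ : Fm) : Fm := .k i (Fm.or φ (.neg φ))

end Fm

/-- An extended awareness structure for agents `ℕ` over `Φ = ℕ`, with set of worlds `W`:
each world has a nonempty local language `L s`, a valuation, possibility relations `R i`,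
and awareness sets `Aw i s` consisting of formulas over the local language. -/
structure EAS (W : Type) where
  L : W → Set ℕ
  L_ne : ∀ s, (L s).Nonempty
  val : W → ℕ → Bool
  R : ℕ → W → W → Prop
  Aw : ℕ → W → Set Fm
  Aw_lang : ∀ i s, ∀ φ ∈ Aw i s, Fm.props φ ⊆ L s

namespace EAS

variable {W : Type}

/-- One level of the truth definition; `univ` interprets the bodies of quantifiers
(at one lower quantifier depth).  A formula is true at `s` only if its primitive
propositions all belong to the local language `L s`. -/
def satAux (M : EAS W) (univ : W → Fm → Prop) : W → Fm → Prop
  | s, .prop p => p ∈ M.L s ∧ M.val s p = true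
  | _, .var _ => False
  | s, .neg φ => Fm.props φ ⊆ M.L s ∧ ¬ satAux M univ s φ
  | s, .and φ ψ => satAux M univ s φ ∧ satAux M univ s ψ
  | s, .k i φ => Fm.props φ ⊆ M.L s ∧ ∀ t, M.R i s t → satAux M univ t φ
  | s, .a i φ => φ ∈ M.Aw i s
  | s, .x i φ => (Fm.props φ ⊆ M.L s ∧ ∀ t, M.R i s t → satAux M univ t φ) ∧ φ ∈ M.Aw i s
  | s, .all v φ => Fm.props φ ⊆ M.L s ∧
      ∀ β : Fm, Fm.qcount β = 0 → Fm.free β = ∅ → Fm.props β ⊆ M.L s →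
        univ s (Fm.substV v β φ)

/-- Truth with quantifier-depth budget `n`. -/
def satN (M : EAS W) : ℕ → W → Fm → Prop
  | 0 => M.satAux fun _ _ => False
  | n + 1 => M.satAux (M.satN n)

/-- `(M,s) ⊨ φ`. Quantifiers range over quantifier-free sentences of the local language. -/
def sat (M : EAS W) (s : W) (φ : Fm) : Prop := M.satN (Fm.qcount φ) s φ

/-- Awareness is generated by primitive propositions. -/
def agpp (M : EAS W) : Prop :=
  ∀ i s (φ : Fm), φ ∈ M.Aw i s ↔ ∀ p ∈ Fm.props φ, Fm.prop p ∈ M.Aw i s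

/-- Agents know what they are aware of. -/
def ka (M : EAS W) : Prop := ∀ i s t, M.R i s t → M.Aw i s = M.Aw i t

end EAS

/-- (Weak) validity in the class `𝒩_n(Φ,𝒳)` of all extended awareness structures
satisfying agpp and ka: truth at every world whose local language contains all the
primitive propositions of the formula. -/
def Valid (φ : Fm) : Prop :=
  ∀ (W : Type) (M : EAS W), M.agpp → M.ka → ∀ s : W, Fm.props φ ⊆ M.L s → M.sat s φ

namespace Fm

@[simp] lemma props_or (φ ψ : Fm) : (or φ ψ).props = φ.props ∪ ψ.props := rfl

@[simp] lemma props_astar (i : ℕ) (φ : Fm) : (astar i φ).props = φ.props := by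
  simp [astar, props]

lemma qcount_imp_astar_k (i : ℕ) (φ : Fm) : (imp (astar i φ) (.k i φ)).qcount = φ.qcount := by
  simp [imp, or, astar, qcount]

end Fm

namespace EAS

variable {W : Type} (M : EAS W) (univ : W → Fm → Prop)

lemma satAux_or {s : W} {φ ψ : Fm} :
    M.satAux univ s (φ.or ψ) ↔ φ.props ∪ ψ.props ⊆ M.L s ∧
      (M.satAux univ s φ ∨ M.satAux univ s ψ) := by
  simp only [Fm.or, satAux, Fm.props, Set.union_subset_iff]
  tauto

lemma satAux_imp {s : W} {φ ψ : Fm} :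
    M.satAux univ s (φ.imp ψ) ↔ φ.props ∪ ψ.props ⊆ M.L s ∧
      (M.satAux univ s φ → M.satAux univ s ψ) := by
  simp only [Fm.imp, satAux_or, satAux, Fm.props, Set.union_subset_iff]
  tauto

lemma satAux_astar {s : W} {i : ℕ} {φ : Fm} :
    M.satAux univ s (Fm.astar i φ) ↔ φ.props ⊆ M.L s ∧ ∀ t, M.R i s t → φ.props ⊆ M.L t := by
  simp only [Fm.astar, satAux, satAux_or, Fm.props_or, Fm.props, Set.union_self]
  refine and_congr_right fun _ => forall₂_congr fun t _ => ?_
  tauto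

lemma satAux_astar_imp_k {i : ℕ} {φ : Fm} (h : ∀ t, φ.props ⊆ M.L t → M.satAux univ t φ)
    {s : W} (hs : φ.props ⊆ M.L s) :
    M.satAux univ s ((Fm.astar i φ).imp (.k i φ)) := by
  refine (M.satAux_imp univ).2 ⟨by simpa [Fm.props] using hs, fun hA => ?_⟩
  exact ⟨hs, fun t hst => h t (((M.satAux_astar univ).1 hA).2 t hst)⟩

lemma exists_satN_eq_satAux (n : ℕ) : ∃ univ, M.satN n = M.satAux univ := by
  cases n <;> exact ⟨_, rfl⟩

end EAS

/-- Gen* is validated by `A_i^*`: if `φ` is true at every world of `M` at which it is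
defined, then `A_i^* φ ⇒ K_i φ` is true at every world at which it is defined. -/
theorem stmt19 {W : Type} (M : EAS W) (i : ℕ) (φ : Fm)
    (h : ∀ s : W, Fm.props φ ⊆ M.L s → M.sat s φ) :
    ∀ s : W, Fm.props φ ⊆ M.L s → M.sat s (Fm.imp (Fm.astar i φ) (.k i φ)) := by
  intro s hs
  obtain ⟨univ, huniv⟩ := M.exists_satN_eq_satAux φ.qcount
  have h' : ∀ t, φ.props ⊆ M.L t → M.satAux univ t φ := fun t ht => huniv ▸ h t ht
  rw [EAS.sat, Fm.qcount_imp_astar_k, huniv]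
  exact M.satAux_astar_imp_k univ h' hs

end AwarenessPaper
end
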